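/- The two ℤ-linear maps on the dP_3 lattice ℤ^4 given by I^{(2)}: l ↦ 2l − e_1 − e_2 − e_3, e_1 ↦ l − e_1 − e_3, e_2 ↦ l − e_2 − e_3, e_3 ↦ l − e_1 − e_2, and I^{(3)}: l ↦ 2l − e_1 − e_2 − e_3, e_1 ↦ l − e_2 − e_3, e_2 ↦ l − e_1 − e_3, e_3 ↦ l − e_1 − e_2, are both involutions (square to the identity), both preserve the intersection form, both fix the canonical class K, and their ±1 eigenspace dimensions are (b_2^+, b_2^−) = (2, 2) for I^{(2)} and (b_2^+, b_2^−) = (3, 1) for I^{(3)}. -/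

import Mathlib

/-!
In the basis `l, e₁, e₂, e₃` both maps are given by integer matrices `M`, and the intersection
form by `Q = diag(1, -1, -1, -1)`. Being an involution, an isometry and fixing `K` become the
identities `M * M = 1`, `Mᵀ * Q * M = Q` and `M *ᵥ K = K`, checked by evaluation. Each eigenlattice
`ker (M ∓ 1)` is computed by exhibiting a basis: it is the image of a matrix `B` which has a left
inverse `C` reading off coordinates, and every kernel vector `x` satisfies `x = B (C x)`.
-/

namespace Stmt7

/-- Intersection form of the dP₃ lattice `ℤ⁴` with basis `l, e₁, e₂, e₃`. -/
def dot (x y : Fin 4 → ℤ) : ℤ := x 0 * y 0 - ∑ i : Fin 3, x i.succ * y i.succ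

def K : Fin 4 → ℤ := fun i => if i = 0 then -3 else 1

def l : Fin 4 → ℤ := Pi.single 0 1

/-- The exceptional class `e_{j+1}` (`j : Fin 3` zero-based); in particular `e 0 = e₁`. -/
def e (j : Fin 3) : Fin 4 → ℤ := Pi.single j.succ 1

open Matrix LinearMap Module

section

variable {R m n k : Type*} [CommRing R] [Fintype n]

theorem eq_toLin'_of_apply_single [DecidableEq n] (f : (n → R) →ₗ[R] m → R) (M : Matrix m n R)
    (h : ∀ j, f (Pi.single j 1) = M.col j) : f = toLin' M := by
  rw [← toLin'_toMatrix' f]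
  congr 1
  ext i j
  rw [toMatrix'_apply, h, col_apply]

theorem toLin'_involutive_of_mul_self_eq_one [DecidableEq n] {M : Matrix n n R} (h : M * M = 1) :
    Function.Involutive (toLin' M) := fun x => by
  rw [toLin'_apply, toLin'_apply, mulVec_mulVec, h, one_mulVec]

theorem dotProduct_mulVec_mulVec_of_transpose_mul_mul_eq {Q M : Matrix n n R}
    (h : Mᵀ * Q * M = Q) (x y : n → R) :
    (M *ᵥ x) ⬝ᵥ (Q *ᵥ (M *ᵥ y)) = x ⬝ᵥ (Q *ᵥ y) := by
  conv_rhs => rw [← h, ← mulVec_mulVec, ← mulVec_mulVec, dotProduct_mulVec, vecMul_transpose]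

theorem finrank_ker_toLin'_eq_card [StrongRankCondition R] [Fintype k] [DecidableEq k]
    [DecidableEq n] (A : Matrix m k R) (B : Matrix k n R) (C : Matrix n k R)
    (hAB : A * B = 0) (hCB : C * B = 1)
    (hker : ∀ x, A *ᵥ x = 0 → x = B *ᵥ (C *ᵥ x)) :
    finrank R (ker (toLin' A)) = Fintype.card n := by
  have hker_eq : ker (toLin' A) = range (toLin' B) := by
    ext x
    simp only [mem_ker, mem_range, toLin'_apply]
    constructor
    · exact fun hx => ⟨C *ᵥ x, (hker x hx).symm⟩
    · rintro ⟨y, rfl⟩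
      rw [mulVec_mulVec, hAB, zero_mulVec]
  have hinj : Function.Injective (toLin' B) := fun y z hyz => by
    simpa only [toLin'_apply, mulVec_mulVec, hCB, one_mulVec] using congrArg (C *ᵥ ·) hyz
  rw [hker_eq, finrank_range_of_inj hinj, finrank_fintype_fun_eq_card]

end

def intersectionMatrix : Matrix (Fin 4) (Fin 4) ℤ := diagonal ![1, -1, -1, -1]

theorem dot_eq_dotProduct_mulVec (x y : Fin 4 → ℤ) :
    dot x y = x ⬝ᵥ (intersectionMatrix *ᵥ y) := by
  simp [dot, intersectionMatrix, mulVec_diagonal, dotProduct, Fin.sum_univ_succ]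
  ring

theorem dot_toLin'_toLin' {M : Matrix (Fin 4) (Fin 4) ℤ}
    (hM : Mᵀ * intersectionMatrix * M = intersectionMatrix) (x y : Fin 4 → ℤ) :
    dot (toLin' M x) (toLin' M y) = dot x y := by
  simp only [dot_eq_dotProduct_mulVec, toLin'_apply,
    dotProduct_mulVec_mulVec_of_transpose_mul_mul_eq hM]

-- Column `j` is the image of the `j`-th basis vector in `l, e₁, e₂, e₃`.
def matI2 : Matrix (Fin 4) (Fin 4) ℤ :=
  !![2, 1, 1, 1; -1, -1, 0, -1; -1, 0, -1, -1; -1, -1, -1, 0]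

def matI3 : Matrix (Fin 4) (Fin 4) ℤ :=
  !![2, 1, 1, 1; -1, 0, -1, -1; -1, -1, 0, -1; -1, -1, -1, 0]

theorem finrank_ker_toLin'_matI2_sub_one : finrank ℤ (ker (toLin' (matI2 - 1))) = 2 := by
  refine finrank_ker_toLin'_eq_card _ !![1, 0; 0, 1; 0, 1; -1, -2] !![1, 0, 0, 0; 0, 1, 0, 0]
    (by decide) (by decide) fun x hx => ?_
  have h := congrFun hx
  simp [matI2, Fin.forall_fin_succ, mulVec, dotProduct, Fin.sum_univ_four, one_apply] at h
  ext i; fin_cases i <;> simp [mulVec, dotProduct, Fin.sum_univ_succ] <;> omega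

theorem finrank_ker_toLin'_matI2_add_one : finrank ℤ (ker (toLin' (matI2 + 1))) = 2 := by
  refine finrank_ker_toLin'_eq_card _ !![1, 0; 0, 1; -2, -1; -1, 0] !![1, 0, 0, 0; 0, 1, 0, 0]
    (by decide) (by decide) fun x hx => ?_
  have h := congrFun hx
  simp [matI2, Fin.forall_fin_succ, mulVec, dotProduct, Fin.sum_univ_four, one_apply] at h
  ext i; fin_cases i <;> simp [mulVec, dotProduct, Fin.sum_univ_succ] <;> omega

theorem finrank_ker_toLin'_matI3_sub_one : finrank ℤ (ker (toLin' (matI3 - 1))) = 3 := by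
  refine finrank_ker_toLin'_eq_card _ !![1, 0, 0; 0, 1, 0; 0, 0, 1; -1, -1, -1]
    !![1, 0, 0, 0; 0, 1, 0, 0; 0, 0, 1, 0] (by decide) (by decide) fun x hx => ?_
  have h := congrFun hx
  simp [matI3, Fin.forall_fin_succ, mulVec, dotProduct, Fin.sum_univ_four, one_apply] at h
  ext i; fin_cases i <;> simp [mulVec, dotProduct, Fin.sum_univ_succ]
  omega

theorem finrank_ker_toLin'_matI3_add_one : finrank ℤ (ker (toLin' (matI3 + 1))) = 1 := by
  refine finrank_ker_toLin'_eq_card _ !![1; -1; -1; -1] !![1, 0, 0, 0]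
    (by decide) (by decide) fun x hx => ?_
  have h := congrFun hx
  simp [matI3, Fin.forall_fin_succ, mulVec, dotProduct, Fin.sum_univ_four, one_apply] at h
  ext i; fin_cases i <;> simp [mulVec, dotProduct, Fin.sum_univ_succ] <;> omega

theorem statement7 (I2 I3 : (Fin 4 → ℤ) →ₗ[ℤ] (Fin 4 → ℤ))
    (h2l : I2 l = (2 : ℤ) • l - e 0 - e 1 - e 2)
    (h2e1 : I2 (e 0) = l - e 0 - e 2)
    (h2e2 : I2 (e 1) = l - e 1 - e 2)
    (h2e3 : I2 (e 2) = l - e 0 - e 1)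
    (h3l : I3 l = (2 : ℤ) • l - e 0 - e 1 - e 2)
    (h3e1 : I3 (e 0) = l - e 1 - e 2)
    (h3e2 : I3 (e 1) = l - e 0 - e 2)
    (h3e3 : I3 (e 2) = l - e 0 - e 1) :
    (∀ x, I2 (I2 x) = x) ∧ (∀ x, I3 (I3 x) = x) ∧
    (∀ x y, dot (I2 x) (I2 y) = dot x y) ∧ (∀ x y, dot (I3 x) (I3 y) = dot x y) ∧
    I2 K = K ∧ I3 K = K ∧
    Module.finrank ℤ ↥(LinearMap.ker (I2 - LinearMap.id)) = 2 ∧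
    Module.finrank ℤ ↥(LinearMap.ker (I2 + LinearMap.id)) = 2 ∧
    Module.finrank ℤ ↥(LinearMap.ker (I3 - LinearMap.id)) = 3 ∧
    Module.finrank ℤ ↥(LinearMap.ker (I3 + LinearMap.id)) = 1 := by
  obtain rfl : I2 = toLin' matI2 := eq_toLin'_of_apply_single _ _ fun j => by
    fin_cases j
    exacts [h2l.trans (by decide), h2e1.trans (by decide), h2e2.trans (by decide),
      h2e3.trans (by decide)]
  obtain rfl : I3 = toLin' matI3 := eq_toLin'_of_apply_single _ _ fun j => by
    fin_cases j
    exacts [h3l.trans (by decide), h3e1.trans (by decide), h3e2.trans (by decide),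
      h3e3.trans (by decide)]
  rw [← toLin'_one, ← map_sub, ← map_add, ← map_sub, ← map_add]
  exact ⟨toLin'_involutive_of_mul_self_eq_one (by decide),
    toLin'_involutive_of_mul_self_eq_one (by decide),
    dot_toLin'_toLin' (by decide), dot_toLin'_toLin' (by decide),
    by decide, by decide,
    finrank_ker_toLin'_matI2_sub_one, finrank_ker_toLin'_matI2_add_one,
    finrank_ker_toLin'_matI3_sub_one, finrank_ker_toLin'_matI3_add_one⟩

end Stmt7
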